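/- arXiv:1503.04652 — 3 statements merged into one kernel-verified Lean document; each statement's English description precedes it below -/
import Mathlib

section
/- Let 1 ≤ p < ∞ and 1 ≤ r ≤ ∞. If F : [0,∞) → [0,∞) is locally absolutely continuous with F ∈ Lᵖ([0,∞)), G : [0,∞) → ℝ with G ∈ Lʳ([0,∞)), and (d/dt)F(t) ≤ G(t) for almost every t ≥ 0, then lim_{t→∞} F(t) = 0. -/
/-!
Absolute continuity together with the Lebesgue differentiation theorem identifies the density of
`F` with `F'`, so `F t - F s = ∫ₛᵗ F' ≤ ∫ₛᵗ |G|` for `0 ≤ s ≤ t`. As `G ∈ Lʳ` with `r ≥ 1`, the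
integral `∫ₛᵗ |G|` is uniformly small for `t - δ ≤ s ≤ t` once `t` is large: by Hölder's inequality
`∫ₛᵗ |G| ≤ ‖G‖ᵣ δ^(1 - 1/r)` when `r > 1`, and as a tail of an integrable function when `r = 1`.
As `F ∈ Lᵖ`, every window `(t - δ, t]` far enough out contains a point `s` where `F s` is small.
Then `0 ≤ F t ≤ F s + ∫ₛᵗ |G|` is small.
-/

open MeasureTheory Filter Set
open scoped ENNReal Topology

section Derivative

variable {E : Type*} [NormedAddCommGroup E] [NormedSpace ℝ E] [CompleteSpace E]

theorem ae_eq_of_hasDerivAt_of_eq_add_integral {F F' y : ℝ → E} {a b : ℝ}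
    (hy : IntervalIntegrable y volume a b)
    (hFy : ∀ x ∈ Icc a b, F x = F a + ∫ u in a..x, y u) :
    ∀ᵐ x, x ∈ Ioo a b → HasDerivAt F (F' x) x → F' x = y x := by
  filter_upwards [hy.ae_hasDerivAt_integral] with x hy_deriv hx hF
  have hab : a ≤ b := hx.1.le.trans hx.2.le
  have hFy_near : F =ᶠ[𝓝 x] fun x => F a + ∫ u in a..x, y u :=
    eventually_of_mem (Icc_mem_nhds hx.1 hx.2) hFy
  refine hF.unique (((hy_deriv ?_ a ?_).const_add (F a)).congr_of_eventuallyEq hFy_near)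
  · exact uIcc_of_le hab ▸ Ioo_subset_Icc_self hx
  · exact left_mem_uIcc

end Derivative

theorem sub_le_integral_of_eq_add_integral {F F' G y : ℝ → ℝ} {a b s t : ℝ}
    (hy : IntervalIntegrable y volume a b)
    (hFy : ∀ x ∈ Icc a b, F x = F a + ∫ u in a..x, y u)
    (has : a ≤ s) (hst : s ≤ t) (htb : t ≤ b)
    (hderiv : ∀ᵐ x, x ∈ Ioo s t → HasDerivAt F (F' x) x)
    (hle : ∀ᵐ x, x ∈ Ioo s t → F' x ≤ G x) (hG : IntervalIntegrable G volume s t) :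
    F t - F s ≤ ∫ x in s..t, G x := by
  have hy_to (x : ℝ) (hx : x ∈ Icc s t) : IntervalIntegrable y volume a x :=
    hy.mono_set (uIcc_subset_uIcc left_mem_uIcc
      (Icc_subset_uIcc ⟨has.trans hx.1, hx.2.trans htb⟩))
  have hy_s := hy_to s (left_mem_Icc.2 hst)
  have hy_t := hy_to t (right_mem_Icc.2 hst)
  have hFst : F t - F s = ∫ x in s..t, y x := by
    rw [hFy t ⟨has.trans hst, htb⟩, hFy s ⟨has, hst.trans htb⟩, add_sub_add_left_eq_sub,
      intervalIntegral.integral_interval_sub_left hy_t hy_s]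
  rw [hFst]
  refine intervalIntegral.integral_mono_ae_restrict hst (hy_s.symm.trans hy_t) hG ?_
  rw [EventuallyLE, ← Measure.restrict_congr_set Ioo_ae_eq_Icc, ae_restrict_iff' measurableSet_Ioo]
  filter_upwards [ae_eq_of_hasDerivAt_of_eq_add_integral hy hFy, hderiv, hle]
    with x hy_eq hF_deriv hF_le hx
  rw [← hy_eq ⟨has.trans_lt hx.1, hx.2.trans_le htb⟩ (hF_deriv hx)]
  exact hF_le hx

section Tails

variable {E : Type*} [NormedAddCommGroup E]

namespace ENNReal

theorem one_sub_inv_toReal_nonneg {r : ℝ≥0∞} (hr : 1 ≤ r) : 0 ≤ 1 - r.toReal⁻¹ := by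
  rcases eq_or_ne r ⊤ with rfl | hr_top
  · simp
  · exact sub_nonneg.2 (inv_le_one_of_one_le₀ (by simpa using ENNReal.toReal_mono hr_top hr))

theorem one_sub_inv_toReal_pos {r : ℝ≥0∞} (hr : 1 < r) : 0 < 1 - r.toReal⁻¹ := by
  rcases eq_or_ne r ⊤ with rfl | hr_top
  · simp
  · exact sub_pos.2 (inv_lt_one_of_one_lt₀ (by simpa using ENNReal.toReal_strict_mono hr_top hr))

end ENNReal

theorem intervalIntegrable_of_memLp {g : ℝ → E} {r : ℝ≥0∞} {a s t : ℝ} (hr : 1 ≤ r)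
    (hg : MemLp g r (volume.restrict (Ici a))) (has : a ≤ s) (hst : s ≤ t) :
    IntervalIntegrable g volume s t :=
  (intervalIntegrable_iff_integrableOn_Ioc_of_le hst).2
    ((hg.mono_measure (Measure.restrict_mono (fun _ hu => has.trans hu.1.le) le_rfl)).integrable hr)

theorem integral_norm_le_eLpNorm_mul_rpow {g : ℝ → E} {r : ℝ≥0∞}
    {a s t : ℝ} (hr : 1 ≤ r) (hg : MemLp g r (volume.restrict (Ici a))) (has : a ≤ s)
    (hst : s ≤ t) :
    ∫ u in s..t, ‖g u‖ ≤
      (eLpNorm g r (volume.restrict (Ici a))).toReal * (t - s) ^ (1 - r.toReal⁻¹) := by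
  have hg_st : MemLp g r (volume.restrict (Ioc s t)) :=
    hg.mono_measure (Measure.restrict_mono (fun _ hu => has.trans hu.1.le) le_rfl)
  have holder : eLpNorm g 1 (volume.restrict (Ioc s t)) ≤
      eLpNorm g r (volume.restrict (Ici a)) * ENNReal.ofReal (t - s) ^ (1 - r.toReal⁻¹) := by
    calc eLpNorm g 1 (volume.restrict (Ioc s t))
        ≤ eLpNorm g r (volume.restrict (Ioc s t)) * volume (Ioc s t) ^ (1 - r.toReal⁻¹) := by
          simpa using eLpNorm_le_eLpNorm_mul_rpow_measure_univ hr hg_st.1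
      _ ≤ eLpNorm g r (volume.restrict (Ici a)) * ENNReal.ofReal (t - s) ^ (1 - r.toReal⁻¹) := by
          rw [Real.volume_Ioc]
          gcongr
          exact fun _ hu => has.trans hu.1.le
  have hfinite : eLpNorm g r (volume.restrict (Ici a)) * ENNReal.ofReal (t - s) ^ (1 - r.toReal⁻¹)
      ≠ ⊤ :=
    ENNReal.mul_ne_top hg.2.ne
      (ENNReal.rpow_ne_top_of_nonneg (ENNReal.one_sub_inv_toReal_nonneg hr) ENNReal.ofReal_ne_top)
  rw [intervalIntegral.integral_of_le hst, integral_norm_eq_lintegral_enorm hg_st.1,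
    ← eLpNorm_one_eq_lintegral_enorm, ← ENNReal.toReal_ofReal (sub_nonneg.2 hst),
    ENNReal.toReal_rpow, ← ENNReal.toReal_mul]
  exact ENNReal.toReal_mono hfinite holder

theorem exists_pos_eventually_integral_norm_le_of_memLp {g : ℝ → E} {r : ℝ≥0∞} {a : ℝ}
    (hr : 1 ≤ r) (hg : MemLp g r (volume.restrict (Ici a))) {ε : ℝ} (hε : 0 < ε) :
    ∃ δ > 0, ∀ᶠ t in atTop, ∀ s ∈ Icc (t - δ) t, ∫ u in s..t, ‖g u‖ ≤ ε := by
  rcases hr.eq_or_lt with rfl | hr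
  · have hg_int : IntegrableOn (fun u => ‖g u‖) (Ioi a) :=
      IntegrableOn.mono_set (memLp_one_iff_integrable.1 hg).norm Ioi_subset_Ici_self
    refine ⟨1, one_pos, ?_⟩
    filter_upwards [(tendsto_integral_Ioi_zero (b := fun t => t - 1)
      (tendsto_atTop_add_const_right _ (-1) tendsto_id)).eventually (ge_mem_nhds hε),
      eventually_ge_atTop (a + 1)] with t htail hat s hs
    calc ∫ u in s..t, ‖g u‖ = ∫ u in Ioc s t, ‖g u‖ := intervalIntegral.integral_of_le hs.2
      _ ≤ ∫ u in Ioi (t - 1), ‖g u‖ :=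
        setIntegral_mono_set (hg_int.mono_set (Ioi_subset_Ioi (by linarith)))
          (ae_of_all _ fun u => norm_nonneg _)
          (Ioc_subset_Ioi_self.trans (Ioi_subset_Ioi hs.1)).eventuallyLE
      _ ≤ ε := htail
  · set B := (eLpNorm g r (volume.restrict (Ici a))).toReal
    set θ := 1 - r.toReal⁻¹
    have hθ : 0 < θ := ENNReal.one_sub_inv_toReal_pos hr
    refine ⟨(ε / (B + 1)) ^ θ⁻¹, by positivity, ?_⟩
    filter_upwards [eventually_ge_atTop (a + (ε / (B + 1)) ^ θ⁻¹)] with t hat s hs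
    calc ∫ u in s..t, ‖g u‖ ≤ B * (t - s) ^ θ :=
          integral_norm_le_eLpNorm_mul_rpow hr.le hg (by linarith [hs.1]) hs.2
      _ ≤ B * ((ε / (B + 1)) ^ θ⁻¹) ^ θ := by gcongr <;> linarith [hs.1, hs.2]
      _ = B / (B + 1) * ε := by rw [Real.rpow_inv_rpow (by positivity) hθ.ne']; ring
      _ ≤ ε := mul_le_of_le_one_left hε.le ((div_le_one (by positivity)).2 (by linarith))

theorem eventually_exists_norm_lt_of_memLp {f : ℝ → E} {p : ℝ≥0∞} {a : ℝ} (hp0 : p ≠ 0)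
    (hp : p ≠ ⊤) (hf : MemLp f p (volume.restrict (Ici a))) {δ c : ℝ} (hδ : 0 < δ)
    (hc : 0 < c) :
    ∀ᶠ t in atTop, ∃ s ∈ Ioc (t - δ) t, ‖f s‖ < c := by
  have hf_int : IntegrableOn (fun u => ‖f u‖ ^ p.toReal) (Ioi a) :=
    IntegrableOn.mono_set (hf.integrable_norm_rpow hp0 hp) Ioi_subset_Ici_self
  have hcδ : 0 < c ^ p.toReal * δ := by positivity
  filter_upwards [(tendsto_integral_Ioi_zero (b := fun t => t - δ)
      (tendsto_atTop_add_const_right _ (-δ) tendsto_id)).eventually (gt_mem_nhds hcδ),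
    eventually_ge_atTop (a + δ)] with t htail hat
  by_contra! hbig
  have hlower : c ^ p.toReal * δ ≤ ∫ u in Ioc (t - δ) t, ‖f u‖ ^ p.toReal := by
    have := setIntegral_ge_of_const_le_real measurableSet_Ioc (by simp)
      (fun u hu => Real.rpow_le_rpow hc.le (hbig u hu) ENNReal.toReal_nonneg)
      (hf_int.mono_set (Ioc_subset_Ioi_self.trans (Ioi_subset_Ioi (by linarith))))
    simpa [Real.volume_real_Ioc_of_le (sub_le_self t hδ.le)] using this
  have hupper : ∫ u in Ioc (t - δ) t, ‖f u‖ ^ p.toReal ≤ ∫ u in Ioi (t - δ), ‖f u‖ ^ p.toReal :=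
    setIntegral_mono_set (hf_int.mono_set (Ioi_subset_Ioi (by linarith)))
      (ae_of_all _ fun u => by positivity) Ioc_subset_Ioi_self.eventuallyLE
  linarith

end Tails

/-- If F ≥ 0 is locally absolutely continuous, F ∈ Lᵖ([0,∞)), G ∈ Lʳ([0,∞)) and
F'(t) ≤ G(t) a.e., then F(t) → 0 as t → ∞. -/
theorem tendsto_zero_of_memLp (p : ℝ≥0∞) (r : ℝ≥0∞)
    (hp : 1 ≤ p) (hp' : p ≠ ⊤) (hr : 1 ≤ r) (F F' G : ℝ → ℝ)
    (hFpos : ∀ t : ℝ, 0 ≤ t → 0 ≤ F t)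
    (hAC : ∀ b : ℝ, 0 < b → ∃ y : ℝ → ℝ, IntegrableOn y (Set.Icc 0 b) ∧
        ∀ t ∈ Set.Icc (0 : ℝ) b, F t = F 0 + ∫ s in (0 : ℝ)..t, y s)
    (hderiv : ∀ᵐ t ∂volume.restrict (Set.Ici (0 : ℝ)), HasDerivAt F (F' t) t)
    (hF : MemLp F p (volume.restrict (Set.Ici 0)))
    (hG : MemLp G r (volume.restrict (Set.Ici 0)))
    (hle : ∀ᵐ t ∂volume.restrict (Set.Ici (0 : ℝ)), F' t ≤ G t) :
    Tendsto F atTop (nhds 0) := by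
  have hF_le (s t : ℝ) (hs : 0 ≤ s) (hst : s ≤ t) (ht : 0 < t) :
      F t - F s ≤ ∫ u in s..t, ‖G u‖ := by
    obtain ⟨y, hy, hFy⟩ := hAC t ht
    have hIoo (x : ℝ) (hx : x ∈ Ioo s t) : x ∈ Ici (0 : ℝ) := hs.trans hx.1.le
    refine sub_le_integral_of_eq_add_integral (F' := F')
      ((intervalIntegrable_iff_integrableOn_Icc_of_le ht.le).2 hy) hFy hs hst le_rfl ?_ ?_ ?_
    · filter_upwards [(ae_restrict_iff' measurableSet_Ici).1 hderiv] with x hx hxst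
      exact hx (hIoo x hxst)
    · filter_upwards [(ae_restrict_iff' measurableSet_Ici).1 hle] with x hx hxst
      exact (hx (hIoo x hxst)).trans (Real.le_norm_self _)
    · exact (intervalIntegrable_of_memLp hr hG hs hst).norm
  refine Metric.tendsto_nhds.2 fun ε hε => ?_
  obtain ⟨δ, hδ, hG_small⟩ := exists_pos_eventually_integral_norm_le_of_memLp hr hG (half_pos hε)
  filter_upwards [hG_small, eventually_exists_norm_lt_of_memLp (zero_lt_one.trans_le hp).ne' hp' hF
    hδ (half_pos hε), eventually_gt_atTop δ] with t hGt ⟨s, hs, hFs⟩ htδ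
  have hs0 : 0 ≤ s := by linarith [hs.1]
  have hFst := hF_le s t hs0 hs.2 (by linarith)
  have hGst := hGt s ⟨hs.1.le, hs.2⟩
  rw [Real.norm_of_nonneg (hFpos s hs0)] at hFs
  rw [Real.dist_0_eq_abs, abs_of_nonneg (hFpos t (by linarith))]
  linarith
end

section
/- Let B : H → H be β-cocoercive with β > 0 and zer B ≠ ∅, and let x : [0,∞) → H be a C² solution of ẍ(t) + γ(t)ẋ(t) + λ(t)B(x(t)) = 0, where λ, γ : [0,∞) → (0,∞) are locally absolutely continuous with γ̇(t) ≤ 0 ≤ λ̇(t) and γ(t)²/λ(t) ≥ (1+θ)/β for some θ > 0, for almost every t. Fix x* ∈ zer B and set h(t) = (1/2)‖x(t) − x*‖². Then for almost every t ≥ 0: ḧ(t) + (d/dt)(γh)(t) + β(d/dt)(γ(t)/λ(t)·‖ẋ(t)‖²) + θ‖ẋ(t)‖² + (β/λ̄)‖ẍ(t)‖² ≤ 0, where λ̄ is any upper bound of λ. -/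
/-!
The damping identity `ẍ + γẋ = -λ B(x)` together with cocoercivity and `B x* = 0` gives
`⟪x - x*, ẍ + γẋ⟫ = -λ⟪x - x*, B x⟫ ≤ -λβ‖B x‖² = -(β/λ)‖ẍ + γẋ‖²`,
whose left side is `ḧ - ‖ẋ‖² + γḣ`. Since `γ` and `γ/λ` are nonincreasing,
`(γh)' ≤ γḣ` and `(γ/λ·‖ẋ‖²)' ≤ (γ/λ)·2⟪ẋ, ẍ⟫`. After expanding `‖ẍ + γẋ‖²` the cross terms
`2βγ/λ·⟪ẋ, ẍ⟫` cancel, and what remains is `(1 + θ - βγ²/λ)‖ẋ‖² + (β/λ̄ - β/λ)‖ẍ‖² ≤ 0`.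
-/

open MeasureTheory
open scoped RealInnerProductSpace

theorem HasDerivAt.le_mul_of_deriv_nonpos {f g : ℝ → ℝ} {f' g' p t : ℝ}
    (hf : HasDerivAt f f' t) (hg : HasDerivAt g g' t) (hfg : HasDerivAt (fun s => f s * g s) p t)
    (hf' : f' ≤ 0) (hg0 : 0 ≤ g t) : p ≤ f t * g' := by
  rw [hfg.unique (hf.mul hg)]
  nlinarith

theorem inner_le_neg_div_mul_norm_sq_of_add_smul_eq_zero {H : Type*} [NormedAddCommGroup H]
    [InnerProductSpace ℝ H] {d b w : H} {β l : ℝ} (hl : 0 < l) (hb : β * ‖b‖ ^ 2 ≤ ⟪d, b⟫)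
    (hw : w + l • b = 0) : ⟪d, w⟫ ≤ -(β / l) * ‖w‖ ^ 2 := by
  rw [eq_neg_of_add_eq_zero_left hw, inner_neg_right, real_inner_smul_right, norm_neg, norm_smul,
    Real.norm_of_nonneg hl.le]
  calc -(l * ⟪d, b⟫) ≤ -(l * (β * ‖b‖ ^ 2)) := neg_le_neg (mul_le_mul_of_nonneg_left hb hl.le)
    _ = -(β / l) * (l * ‖b‖) ^ 2 := by field_simp

theorem energy_inequality_general {H : Type*} [NormedAddCommGroup H] [InnerProductSpace ℝ H]
    (B : H → H) (β θ lambdaBar : ℝ) (hβ : 0 < β)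
    (hcoco : ∀ u v : H, β * ‖B u - B v‖ ^ 2 ≤ ⟪u - v, B u - B v⟫)
    (xstar : H) (hzero : B xstar = 0)
    (lam γ lam' γ' : ℝ → ℝ)
    (hpos : ∀ t : ℝ, 0 ≤ t → 0 < lam t ∧ 0 < γ t)
    (hub : ∀ t : ℝ, 0 ≤ t → lam t ≤ lambdaBar)
    (hlamAC : ∀ᵐ t ∂volume.restrict (Set.Ici (0 : ℝ)), HasDerivAt lam (lam' t) t)
    (hγAC : ∀ᵐ t ∂volume.restrict (Set.Ici (0 : ℝ)), HasDerivAt γ (γ' t) t)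
    (hsign : ∀ᵐ t ∂volume.restrict (Set.Ici (0 : ℝ)), γ' t ≤ 0 ∧ 0 ≤ lam' t)
    (hratio : ∀ᵐ t ∂volume.restrict (Set.Ici (0 : ℝ)), (1 + θ) / β ≤ γ t ^ 2 / lam t)
    (x x' x'' : ℝ → H)
    (hx : ∀ t : ℝ, HasDerivAt x (x' t) t)
    (hx' : ∀ t : ℝ, HasDerivAt x' (x'' t) t)
    (hode : ∀ t : ℝ, 0 ≤ t → x'' t + γ t • x' t + lam t • B (x t) = 0)
    (gh' q' : ℝ → ℝ)
    (hgh : ∀ᵐ t ∂volume.restrict (Set.Ici (0 : ℝ)),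
        HasDerivAt (fun s => γ s * ((1 / 2) * ‖x s - xstar‖ ^ 2)) (gh' t) t)
    (hq : ∀ᵐ t ∂volume.restrict (Set.Ici (0 : ℝ)),
        HasDerivAt (fun s => γ s / lam s * ‖x' s‖ ^ 2) (q' t) t) :
    ∀ᵐ t ∂volume.restrict (Set.Ici (0 : ℝ)),
      (‖x' t‖ ^ 2 + ⟪x t - xstar, x'' t⟫) + gh' t + β * q' t +
          θ * ‖x' t‖ ^ 2 + (β / lambdaBar) * ‖x'' t‖ ^ 2 ≤ 0 := by
  filter_upwards [hγAC, hlamAC, hsign, hratio, hgh, hq, ae_restrict_mem measurableSet_Ici]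
    with t hγt hlamt ⟨hγ'_nonpos, hlam'_nonneg⟩ hrt hght hqt (ht : 0 ≤ t)
  obtain ⟨hl, hg⟩ := hpos t ht
  have hγh : gh' t ≤ γ t * ⟪x t - xstar, x' t⟫ := by
    refine hγt.le_mul_of_deriv_nonpos ?_ hght hγ'_nonpos (by positivity)
    simpa using ((hx t).sub_const xstar).norm_sq.const_mul (1 / 2 : ℝ)
  have hq_le : q' t ≤ γ t / lam t * (2 * ⟪x' t, x'' t⟫) :=
    (hγt.div hlamt hl.ne').le_mul_of_deriv_nonpos (hx' t).norm_sq hqt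
      (div_nonpos_of_nonpos_of_nonneg (by nlinarith) (sq_nonneg _)) (sq_nonneg _)
  have hdamp : ⟪x t - xstar, x'' t⟫ + γ t * ⟪x t - xstar, x' t⟫ ≤
      -(β / lam t) * (‖x'' t‖ ^ 2 + 2 * (γ t * ⟪x' t, x'' t⟫) + (γ t * ‖x' t‖) ^ 2) := by
    have := inner_le_neg_div_mul_norm_sq_of_add_smul_eq_zero hl
      (by simpa [hzero] using hcoco (x t) xstar) (hode t ht)
    rwa [inner_add_right, real_inner_smul_right, norm_add_sq_real, real_inner_smul_right,
      real_inner_comm (x' t) (x'' t), norm_smul, Real.norm_of_nonneg hg.le] at this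
  have hkin : (1 + θ) * ‖x' t‖ ^ 2 ≤ β * γ t ^ 2 / lam t * ‖x' t‖ ^ 2 := by
    rw [div_le_iff₀' hβ, ← mul_div_assoc] at hrt
    exact mul_le_mul_of_nonneg_right hrt (sq_nonneg _)
  have hacc : β / lambdaBar * ‖x'' t‖ ^ 2 ≤ β / lam t * ‖x'' t‖ ^ 2 :=
    mul_le_mul_of_nonneg_right (div_le_div_of_nonneg_left hβ.le hl (hub t ht)) (sq_nonneg _)
  linear_combination hγh + hdamp + hkin + hacc + mul_le_mul_of_nonneg_left hq_le hβ.le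

/-- Key energy inequality in the proof of Theorem 5: along a C² solution of
ẍ + γẋ + λB(x) = 0 with B β-cocoercive, for a.e. t ≥ 0 one has
ḧ(t) + (γh)'(t) + β·(γ/λ·‖ẋ‖²)'(t) + θ‖ẋ(t)‖² + (β/λ̄)‖ẍ(t)‖² ≤ 0,
where h(t) = ½‖x(t) − x*‖². -/
theorem energy_inequality {H : Type*} [NormedAddCommGroup H] [InnerProductSpace ℝ H]
    (B : H → H) (β θ lambdaBar : ℝ) (hβ : 0 < β) (hθ : 0 < θ) (hlbar : 0 < lambdaBar)
    (hcoco : ∀ u v : H, β * ‖B u - B v‖ ^ 2 ≤ ⟪u - v, B u - B v⟫)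
    (xstar : H) (hzero : B xstar = 0)
    (lam γ lam' γ' : ℝ → ℝ)
    (hpos : ∀ t : ℝ, 0 ≤ t → 0 < lam t ∧ 0 < γ t)
    (hub : ∀ t : ℝ, 0 ≤ t → lam t ≤ lambdaBar)
    (hlamAC : ∀ᵐ t ∂volume.restrict (Set.Ici (0 : ℝ)), HasDerivAt lam (lam' t) t)
    (hγAC : ∀ᵐ t ∂volume.restrict (Set.Ici (0 : ℝ)), HasDerivAt γ (γ' t) t)
    (hsign : ∀ᵐ t ∂volume.restrict (Set.Ici (0 : ℝ)), γ' t ≤ 0 ∧ 0 ≤ lam' t)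
    (hratio : ∀ᵐ t ∂volume.restrict (Set.Ici (0 : ℝ)), (1 + θ) / β ≤ γ t ^ 2 / lam t)
    (x x' x'' : ℝ → H)
    (hx : ∀ t : ℝ, HasDerivAt x (x' t) t)
    (hx' : ∀ t : ℝ, HasDerivAt x' (x'' t) t)
    (hode : ∀ t : ℝ, 0 ≤ t → x'' t + γ t • x' t + lam t • B (x t) = 0)
    (gh' q' : ℝ → ℝ)
    (hgh : ∀ᵐ t ∂volume.restrict (Set.Ici (0 : ℝ)),
        HasDerivAt (fun s => γ s * ((1 / 2) * ‖x s - xstar‖ ^ 2)) (gh' t) t)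
    (hq : ∀ᵐ t ∂volume.restrict (Set.Ici (0 : ℝ)),
        HasDerivAt (fun s => γ s / lam s * ‖x' s‖ ^ 2) (q' t) t) :
    ∀ᵐ t ∂volume.restrict (Set.Ici (0 : ℝ)),
      (‖x' t‖ ^ 2 + ⟪x t - xstar, x'' t⟫) + gh' t + β * q' t +
          θ * ‖x' t‖ ^ 2 + (β / lambdaBar) * ‖x'' t‖ ^ 2 ≤ 0 :=
  energy_inequality_general B β θ lambdaBar hβ hcoco xstar hzero lam γ lam' γ' hpos hub hlamAC hγAC
    hsign hratio x x' x'' hx hx' hode gh' q' hgh hq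
end

section
/- Let g : H → ℝ be convex and Fréchet differentiable with (1/β)-Lipschitz gradient for β > 0, x* a minimizer of g, x : [0,∞) → H a C² solution of ẍ(t) + γ(t)ẋ(t) + λ(t)∇g(x(t)) = 0 with γ twice differentiable and γ̇ ≤ 0, 2γ̇(t)γ(t) − γ̈(t) ≤ 0 and γ(t)λ(t) − λ̇(t) ≥ ζ > 0 for a.e. t. Then for a.e. t ≥ 0: (d/dt)[ (1/2)‖ẋ(t) + γ(t)(x(t)−x*)‖² + λ(t)g(x(t)) − (γ̇(t)/2)‖x(t)−x*‖² ] ≤ −ζ(g(x(t)) − g(x*)) + λ̇(t)g(x*). -/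
/-!
Along the trajectory, the ODE turns the derivative of the energy into
`-λγ⟪∇g(x), x - x*⟫ + (γγ̇ - γ̈/2)‖x - x*‖² + λ̇ g(x)`. The middle term is nonpositive,
convexity gives `⟪∇g(x), x - x*⟫ ≥ g(x) - g(x*) ≥ 0`, and then `γλ - λ̇ ≥ ζ` finishes.
-/

open MeasureTheory
open scoped RealInnerProductSpace

theorem ConvexOn.fderiv_sub_le {E : Type*} [NormedAddCommGroup E] [NormedSpace ℝ E]
    {s : Set E} {f : E → ℝ} {f' : E →L[ℝ] ℝ} {u v : E} (hf : ConvexOn ℝ s f)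
    (hu : u ∈ s) (hv : v ∈ s) (hf' : HasFDerivAt f f' u) : f' (v - u) ≤ f v - f u := by
  set L : ℝ →ᵃ[ℝ] E := AffineMap.lineMap u v
  have hfL : HasDerivAt (f ∘ L) (f' (v - u)) 0 :=
    (by simpa [L] using hf' : HasFDerivAt f f' (L 0)).comp_hasDerivAt 0
      AffineMap.hasDerivAt_lineMap
  have h := (hf.comp_affineMap L).le_slope_of_hasDerivAt (by simpa [L]) (by simpa [L])
    one_pos hfL
  simpa [slope, L] using h

theorem ConvexOn.inner_gradient_sub_le {F : Type*} [NormedAddCommGroup F]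
    [InnerProductSpace ℝ F] [CompleteSpace F]
    {s : Set F} {f : F → ℝ} {f' u v : F} (hf : ConvexOn ℝ s f)
    (hu : u ∈ s) (hv : v ∈ s) (hf' : HasGradientAt f f' u) : ⟪f', v - u⟫ ≤ f v - f u := by
  simpa using hf.fderiv_sub_le hu hv hf'.hasFDerivAt

theorem hasDerivAt_energy_of_ode {H : Type*} [NormedAddCommGroup H] [InnerProductSpace ℝ H]
    [CompleteSpace H] {g : H → ℝ} {x x' : ℝ → H} {lam γ γ' : ℝ → ℝ} {x'' d xstar : H}
    {l c t : ℝ} (hx : HasDerivAt x (x' t) t) (hx' : HasDerivAt x' x'' t)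
    (hγ : HasDerivAt γ (γ' t) t) (hγ' : HasDerivAt γ' c t) (hlam : HasDerivAt lam l t)
    (hg : HasGradientAt g d (x t)) (hode : x'' + γ t • x' t + lam t • d = 0) :
    HasDerivAt (fun s => (1 / 2) * ‖x' s + γ s • (x s - xstar)‖ ^ 2 +
        lam s * g (x s) - γ' s / 2 * ‖x s - xstar‖ ^ 2)
      (-(lam t * γ t) * ⟪d, x t - xstar⟫ + (γ t * γ' t - c / 2) * ‖x t - xstar‖ ^ 2 +
        l * g (x t)) t := by
  obtain rfl : x'' = -(γ t • x' t + lam t • d) := by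
    rw [add_assoc] at hode; exact eq_neg_of_add_eq_zero_left hode
  have hxs : HasDerivAt (fun s => x s - xstar) (x' t) t := hx.sub_const xstar
  have hv : HasDerivAt (fun s => x' s + γ s • (x s - xstar))
      (-(lam t • d) + γ' t • (x t - xstar)) t :=
    (hx'.add (hγ.smul hxs)).congr_deriv (by module)
  have hgx : HasDerivAt (fun s => g (x s)) ⟪d, x' t⟫ t := by
    have h := hg.hasFDerivAt.comp_hasDerivAt t hx
    simp only [InnerProductSpace.toDual_apply_apply] at h
    exact h
  refine (((hv.norm_sq.const_mul (1 / 2)).add (hlam.mul hgx)).sub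
    ((hγ'.div_const 2).mul hxs.norm_sq)).congr_deriv ?_
  simp only [inner_add_left, inner_add_right, inner_neg_right, inner_smul_left, inner_smul_right,
    real_inner_self_eq_norm_sq, real_inner_comm d (x' t),
    real_inner_comm d (x t - xstar), real_inner_comm (x t - xstar) (x' t), RCLike.conj_to_real]
  ring

theorem energy_decay_gradient_general {H : Type*} [NormedAddCommGroup H] [InnerProductSpace ℝ H]
    [CompleteSpace H]
    (g : H → ℝ) (Dg : H → H) (ζ : ℝ)
    (hconv : ConvexOn ℝ Set.univ g)
    (hgrad : ∀ u : H, HasGradientAt g (Dg u) u)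
    (xstar : H) (hmin : ∀ u : H, g xstar ≤ g u)
    (lam γ lam' γ' γ'' : ℝ → ℝ)
    (hpos : ∀ t : ℝ, 0 ≤ t → 0 < lam t ∧ 0 < γ t)
    (hγd : ∀ t : ℝ, HasDerivAt γ (γ' t) t)
    (hγd2 : ∀ t : ℝ, HasDerivAt γ' (γ'' t) t)
    (hlamAC : ∀ᵐ t ∂volume.restrict (Set.Ici (0 : ℝ)), HasDerivAt lam (lam' t) t)
    (hγ2 : ∀ᵐ t ∂volume.restrict (Set.Ici (0 : ℝ)), 2 * γ' t * γ t - γ'' t ≤ 0)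
    (hζineq : ∀ᵐ t ∂volume.restrict (Set.Ici (0 : ℝ)), ζ ≤ γ t * lam t - lam' t)
    (x x' x'' : ℝ → H)
    (hx : ∀ t : ℝ, HasDerivAt x (x' t) t)
    (hx' : ∀ t : ℝ, HasDerivAt x' (x'' t) t)
    (hode : ∀ t : ℝ, 0 ≤ t → x'' t + γ t • x' t + lam t • Dg (x t) = 0)
    (E' : ℝ → ℝ)
    (hE : ∀ᵐ t ∂volume.restrict (Set.Ici (0 : ℝ)),
        HasDerivAt (fun s => (1 / 2) * ‖x' s + γ s • (x s - xstar)‖ ^ 2 +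
          lam s * g (x s) - γ' s / 2 * ‖x s - xstar‖ ^ 2) (E' t) t) :
    ∀ᵐ t ∂volume.restrict (Set.Ici (0 : ℝ)),
      E' t ≤ -ζ * (g (x t) - g xstar) + lam' t * g xstar := by
  filter_upwards [ae_restrict_mem measurableSet_Ici, hlamAC, hγ2, hζineq, hE]
    with t (ht : 0 ≤ t) hlam hγ2t hζt hEt
  obtain ⟨hlam_pos, hγ_pos⟩ := hpos t ht
  rw [hEt.unique (hasDerivAt_energy_of_ode (hx t) (hx' t) (hγd t) (hγd2 t) hlam (hgrad (x t))
    (hode t ht))]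
  have hgap : g (x t) - g xstar ≤ ⟪Dg (x t), x t - xstar⟫ := by
    have h := hconv.inner_gradient_sub_le (Set.mem_univ _) (Set.mem_univ xstar) (hgrad (x t))
    rw [← neg_sub, inner_neg_right] at h
    linarith
  have hmin_t : 0 ≤ g (x t) - g xstar := sub_nonneg.mpr (hmin (x t))
  have hdamp : (γ t * γ' t - γ'' t / 2) * ‖x t - xstar‖ ^ 2 ≤ 0 :=
    mul_nonpos_of_nonpos_of_nonneg (by linarith) (sq_nonneg _)
  linarith [mul_le_mul_of_nonneg_left hgap (mul_pos hlam_pos hγ_pos).le,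
    mul_le_mul_of_nonneg_right hζt hmin_t]

/-- Energy decay estimate along a C² solution of ẍ + γẋ + λ∇g(x) = 0: for a.e. t ≥ 0,
(d/dt)[½‖ẋ + γ(x − x*)‖² + λ·g(x) − (γ̇/2)‖x − x*‖²] ≤ −ζ(g(x) − g(x*)) + λ̇·g(x*). -/
theorem energy_decay_gradient {H : Type*} [NormedAddCommGroup H] [InnerProductSpace ℝ H]
    [CompleteSpace H]
    (g : H → ℝ) (Dg : H → H) (β ζ : ℝ) (hβ : 0 < β) (hζ : 0 < ζ)
    (hconv : ConvexOn ℝ Set.univ g)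
    (hgrad : ∀ u : H, HasGradientAt g (Dg u) u)
    (hlip : ∀ u v : H, ‖Dg u - Dg v‖ ≤ (1 / β) * ‖u - v‖)
    (xstar : H) (hmin : ∀ u : H, g xstar ≤ g u)
    (lam γ lam' γ' γ'' : ℝ → ℝ)
    (hpos : ∀ t : ℝ, 0 ≤ t → 0 < lam t ∧ 0 < γ t)
    (hγd : ∀ t : ℝ, HasDerivAt γ (γ' t) t)
    (hγd2 : ∀ t : ℝ, HasDerivAt γ' (γ'' t) t)
    (hlamAC : ∀ᵐ t ∂volume.restrict (Set.Ici (0 : ℝ)), HasDerivAt lam (lam' t) t)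
    (hγsign : ∀ᵐ t ∂volume.restrict (Set.Ici (0 : ℝ)), γ' t ≤ 0)
    (hγ2 : ∀ᵐ t ∂volume.restrict (Set.Ici (0 : ℝ)), 2 * γ' t * γ t - γ'' t ≤ 0)
    (hζineq : ∀ᵐ t ∂volume.restrict (Set.Ici (0 : ℝ)), ζ ≤ γ t * lam t - lam' t)
    (x x' x'' : ℝ → H)
    (hx : ∀ t : ℝ, HasDerivAt x (x' t) t)
    (hx' : ∀ t : ℝ, HasDerivAt x' (x'' t) t)
    (hode : ∀ t : ℝ, 0 ≤ t → x'' t + γ t • x' t + lam t • Dg (x t) = 0)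
    (E' : ℝ → ℝ)
    (hE : ∀ᵐ t ∂volume.restrict (Set.Ici (0 : ℝ)),
        HasDerivAt (fun s => (1 / 2) * ‖x' s + γ s • (x s - xstar)‖ ^ 2 +
          lam s * g (x s) - γ' s / 2 * ‖x s - xstar‖ ^ 2) (E' t) t) :
    ∀ᵐ t ∂volume.restrict (Set.Ici (0 : ℝ)),
      E' t ≤ -ζ * (g (x t) - g xstar) + lam' t * g xstar :=
  energy_decay_gradient_general g Dg ζ hconv hgrad xstar hmin lam γ lam' γ' γ'' hpos hγd hγd2 hlamAC
    hγ2 hζineq x x' x'' hx hx' hode E' hE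
end
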